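/- arXiv:1708.03159 — 3 statements merged into one kernel-verified Lean document; each statement's English description precedes it below -/
import Mathlib

section
/- Let η : ℝ → ℂ be measurable with Re η(p) ≤ 0 for all p and |η(p)| ≤ C(1+p²) for some constant C > 0, and let ν be a Borel measure on (0,∞) with ∫_0^∞ min(s,1) ν(ds) < ∞; set f(λ) = ∫_0^∞ (1 − e^{−λs}) ν(ds) for Re λ ≥ 0. For z ≥ 0 and h ∈ 𝒮(ℝ) define T_z h(x) = (2π)^{-1/2} ∫_ℝ e^{ipx} e^{z η(p)} ĥ(p) dp. Then for every h ∈ 𝒮(ℝ) and x ∈ ℝ the integral ∫_0^∞ ( T_z h(x) − h(x) ) ν(dz) converges absolutely and equals (2π)^{-1/2} ∫_ℝ e^{ipx} ( −f(−η(p)) ) ĥ(p) dp. -/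
/-!
For `Re w ≤ 0` the mean value theorem gives `‖e^{z w} - 1‖ ≤ min(z, 1) (‖w‖ + 2)` for
`z ≥ 0`. With `w = η(p)`, the growth bound on `η` and the decay of `ĥ` make
`(z, p) ↦ (e^{z η(p)} - 1) ĥ(p) e^{ipx}` integrable for `ν ⊗ dp`, since `min(z, 1)` is
`ν`-integrable (which also makes `ν` σ-finite, as `min(z, 1) > 0` `ν`-a.e.). Fourier inversion
turns `T_z h(x) - h(x)` into the Fourier integral of `(e^{z η} - 1) ĥ`, and Fubini then produces
`∫ (e^{z η(p)} - 1) ν(dz) = -f(-η(p))` inside the `p`-integral.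
-/

open MeasureTheory Complex Real Filter

/-- Fourier transform with the `(2π)^{-1/2}` normalization. -/
noncomputable def fhat (f : ℝ → ℂ) (p : ℝ) : ℂ :=
  (Real.sqrt (2 * Real.pi))⁻¹ * ∫ x : ℝ, Complex.exp (-(Complex.I * p * x)) * f x

open FourierTransform

lemma sigmaFinite_of_integrable_of_ae_ne_zero {α E : Type*} [MeasurableSpace α]
    [NormedAddCommGroup E] {μ : Measure α} {f : α → E} (hf : Integrable f μ)
    (hne : ∀ᵐ a ∂μ, f a ≠ 0) : SigmaFinite μ := by
  have hfin := hf.aefinStronglyMeasurable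
  have hzero := hfin.ae_eq_zero_compl
  rw [EventuallyEq, ae_restrict_iff' hfin.measurableSet.compl] at hzero
  have hmem : ∀ᵐ a ∂μ, a ∈ hfin.sigmaFiniteSet := by
    filter_upwards [hzero, hne] with a hza hna
    by_contra ha
    exact hna (hza ha)
  rw [← Measure.restrict_eq_self_of_ae_mem hmem]
  infer_instance

lemma integrable_min_one_of_lintegral_lt_top {ν : Measure ℝ} (hν : ∀ᵐ s ∂ν, 0 ≤ s)
    (hνfin : ∫⁻ s, ENNReal.ofReal (min s 1) ∂ν < ⊤) : Integrable (fun s => min s 1) ν :=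
  (lintegral_ofReal_ne_top_iff_integrable (by fun_prop)
    (hν.mono fun _ hs => le_min hs zero_le_one)).mp hνfin.ne

lemma sigmaFinite_of_lintegral_min_one_lt_top {ν : Measure ℝ} (hν : ∀ᵐ s ∂ν, 0 < s)
    (hνfin : ∫⁻ s, ENNReal.ofReal (min s 1) ∂ν < ⊤) : SigmaFinite ν :=
  sigmaFinite_of_integrable_of_ae_ne_zero
    (integrable_min_one_of_lintegral_lt_top (hν.mono fun _ => le_of_lt) hνfin)
    (hν.mono fun _ hs => (lt_min hs one_pos).ne')

lemma Complex.norm_exp_sub_one_le_norm_of_re_nonpos {w : ℂ} (hw : w.re ≤ 0) :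
    ‖exp w - 1‖ ≤ ‖w‖ := by
  have hderiv : ∀ z ∈ {z : ℂ | z.re ≤ 0}, ‖deriv exp z‖ ≤ 1 := fun z hz => by
    rw [Complex.deriv_exp, Complex.norm_exp]
    exact Real.exp_le_one_iff.mpr hz
  simpa using (convex_halfSpace_re_le 0).norm_image_sub_le_of_norm_deriv_le
    (fun z _ => differentiableAt_exp) hderiv (x := 0) (y := w) (by simp) hw

lemma Complex.norm_exp_sub_one_le_two_of_re_nonpos {w : ℂ} (hw : w.re ≤ 0) :
    ‖exp w - 1‖ ≤ 2 :=
  calc ‖exp w - 1‖ ≤ ‖exp w‖ + ‖(1 : ℂ)‖ := norm_sub_le _ _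
    _ ≤ 1 + 1 := by gcongr; simpa [Complex.norm_exp] using hw; simp
    _ = 2 := by norm_num

lemma Complex.norm_exp_ofReal_mul_sub_one_le {z : ℝ} {w : ℂ} (hz : 0 ≤ z) (hw : w.re ≤ 0) :
    ‖exp (z * w) - 1‖ ≤ min z 1 * (‖w‖ + 2) := by
  have hzw : (z * w : ℂ).re ≤ 0 := by simpa using mul_nonpos_of_nonneg_of_nonpos hz hw
  rcases le_total z 1 with hz1 | hz1
  · calc ‖exp (z * w) - 1‖ ≤ ‖(z * w : ℂ)‖ := norm_exp_sub_one_le_norm_of_re_nonpos hzw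
      _ = z * ‖w‖ := by simp [abs_of_nonneg hz]
      _ ≤ min z 1 * (‖w‖ + 2) := by rw [min_eq_left hz1]; nlinarith
  · calc ‖exp (z * w) - 1‖ ≤ 2 := norm_exp_sub_one_le_two_of_re_nonpos hzw
      _ ≤ min z 1 * (‖w‖ + 2) := by rw [min_eq_right hz1]; linarith [norm_nonneg w]


lemma fhat_eq_fourier (f : ℝ → ℂ) (p : ℝ) :
    fhat f p = ((√(2 * π))⁻¹ : ℝ) * 𝓕 f (p / (2 * π)) := by
  rw [fhat, Real.fourier_real_eq_integral_exp_smul]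
  congr 1
  refine integral_congr_ae (Eventually.of_forall fun v => ?_)
  simp only [smul_eq_mul]
  congr 2
  push_cast
  field_simp

lemma exists_schwartzMap_eq_fhat (h : SchwartzMap ℝ ℂ) :
    ∃ g : SchwartzMap ℝ ℂ, ⇑g = fhat ⇑h := by
  let scale : ℝ ≃L[ℝ] ℝ :=
    ContinuousLinearEquiv.unitsEquivAut ℝ (Units.mk0 (2 * π)⁻¹ (by positivity))
  refine ⟨(((√(2 * π))⁻¹ : ℝ) : ℂ) •
    SchwartzMap.compCLMOfContinuousLinearEquiv ℂ scale (𝓕 h), ?_⟩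
  ext p
  simp [scale, fhat_eq_fourier, SchwartzMap.fourier_coe, div_eq_mul_inv]

lemma SchwartzMap.integrable_cexp_mul_fhat (h : SchwartzMap ℝ ℂ) (x : ℝ) :
    Integrable (fun p : ℝ => exp (I * p * x) * fhat h p) := by
  obtain ⟨g, hg⟩ := exists_schwartzMap_eq_fhat h
  rw [← hg]
  exact g.integrable.bdd_mul (c := 1) (by fun_prop) (Eventually.of_forall fun p => by
    simp [norm_exp])

lemma SchwartzMap.integrable_one_add_sq_mul_norm {V : Type*} [NormedAddCommGroup V]
    [NormedSpace ℝ V] (g : SchwartzMap ℝ V) :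
    Integrable (fun p : ℝ => (1 + p ^ 2) * ‖g p‖) := by
  refine (g.integrable.norm.add (g.integrable_pow_mul volume 2)).congr
    (Eventually.of_forall fun p => ?_)
  simp only [Pi.add_apply, Real.norm_eq_abs, sq_abs]
  ring

lemma SchwartzMap.integrable_norm_add_two_mul_norm {V : Type*} [NormedAddCommGroup V]
    [NormedSpace ℝ V] {w : ℝ → ℂ} (hw : Measurable w) {C : ℝ}
    (hbound : ∀ p, ‖w p‖ ≤ C * (1 + p ^ 2)) (g : SchwartzMap ℝ V) :
    Integrable (fun p => (‖w p‖ + 2) * ‖g p‖) := by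
  refine ((g.integrable_one_add_sq_mul_norm.const_mul C).add (g.integrable.norm.const_mul 2)).mono'
    (by fun_prop) (Eventually.of_forall fun p => ?_)
  rw [Real.norm_of_nonneg (by positivity)]
  have := hbound p
  simp only [Pi.add_apply]
  nlinarith [norm_nonneg (g p)]

lemma Continuous.fhat_inversion {f : ℝ → ℂ} (hf : Continuous f) (hfi : Integrable f)
    (hFf : Integrable (𝓕 f)) (y : ℝ) :
    ((√(2 * π))⁻¹ : ℝ) * ∫ p : ℝ, exp (I * p * y) * fhat f p = f y := by
  set c : ℝ := (√(2 * π))⁻¹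
  set G : ℝ → ℂ := fun ξ => exp (↑(2 * π * (ξ * y)) * I) • 𝓕 f ξ
  have hpoint : ∀ p : ℝ, exp (I * p * y) * fhat f p = c * G (p / (2 * π)) := fun p => by
    simp only [G, fhat_eq_fourier, smul_eq_mul]
    have : I * p * y = ↑(2 * π * (p / (2 * π) * y)) * I := by push_cast; field_simp
    rw [this]
    ring
  have hinv : ∫ ξ, G ξ = f y := by
    rw [← hf.fourierInv_fourier_eq hfi hFf, Real.fourierInv_eq']
    simp [G, mul_comm]
  have hc : (c : ℂ) * c * (2 * π : ℝ) = 1 := by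
    norm_cast
    rw [← mul_inv, Real.mul_self_sqrt (by positivity), inv_mul_cancel₀ (by positivity)]
  calc (c : ℂ) * ∫ p : ℝ, exp (I * p * y) * fhat f p
      = c * (c * ((2 * π : ℝ) • ∫ ξ, G ξ)) := by
        simp_rw [hpoint, integral_const_mul, Measure.integral_comp_div G (2 * π),
          abs_of_pos (by positivity : (0:ℝ) < 2 * π)]
    _ = f y := by rw [hinv, Complex.real_smul, ← mul_assoc, ← mul_assoc, hc, one_mul]

section Subordination

variable {η g : ℝ → ℂ} {ν : Measure ℝ}

lemma integrable_cexp_mul_sub_one_mul_prod [SigmaFinite ν] (hη : Measurable η)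
    (hre : ∀ p, (η p).re ≤ 0) (hν : ∀ᵐ z ∂ν, 0 ≤ z)
    (hmin : Integrable (fun z => min z 1) ν)
    (hg : AEStronglyMeasurable g) (hηg : Integrable (fun p => (‖η p‖ + 2) * ‖g p‖)) :
    Integrable (fun q : ℝ × ℝ => (exp (q.1 * η q.2) - 1) * g q.2) (ν.prod volume) := by
  refine (hmin.mul_prod hηg).mono' ?_ ?_
  · exact (((measurable_ofReal.comp measurable_fst).mul (hη.comp measurable_snd)).cexp.sub
      measurable_const).aestronglyMeasurable.mul hg.comp_snd
  · filter_upwards [Measure.quasiMeasurePreserving_fst.ae hν] with ⟨z, p⟩ hz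
    rw [norm_mul, ← mul_assoc]
    gcongr
    exact norm_exp_ofReal_mul_sub_one_le hz (hre p)

lemma integral_cexp_ofReal_mul_mul_sub_integral (hη : Measurable η) (hre : ∀ p, (η p).re ≤ 0)
    {z : ℝ} (hz : 0 ≤ z) (hg : Integrable g) :
    (∫ p, exp (z * η p) * g p) - ∫ p, g p = ∫ p, (exp (z * η p) - 1) * g p := by
  have hexp : Integrable (fun p => exp (z * η p) * g p) := by
    refine hg.bdd_mul (c := 1) (by fun_prop) (Eventually.of_forall fun p => ?_)
    rw [norm_exp]
    exact Real.exp_le_one_iff.mpr (by simpa using mul_nonpos_of_nonneg_of_nonpos hz (hre p))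
  rw [← integral_sub hexp hg]
  simp_rw [sub_mul, one_mul]

lemma SchwartzMap.fhat_multiplier_cexp_sub_self (hη : Measurable η) (hre : ∀ p, (η p).re ≤ 0)
    {z : ℝ} (hz : 0 ≤ z) (h : SchwartzMap ℝ ℂ) (x : ℝ) :
    (((√(2 * π))⁻¹ : ℝ) * ∫ p : ℝ, exp (I * p * x) * (exp (z * η p) * fhat h p)) - h x
      = ((√(2 * π))⁻¹ : ℝ) *
        ∫ p : ℝ, (exp (z * η p) - 1) * (exp (I * p * x) * fhat h p) := by
  rw [← integral_cexp_ofReal_mul_mul_sub_integral hη hre hz (h.integrable_cexp_mul_fhat x),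
    mul_sub, h.continuous.fhat_inversion h.integrable (𝓕 h).integrable]
  simp only [mul_left_comm]

end Subordination

theorem stmt4_general
    (η : ℝ → ℂ) (hηm : Measurable η)
    (hre : ∀ p : ℝ, (η p).re ≤ 0)
    (C : ℝ)
    (hbound : ∀ p : ℝ, ‖η p‖ ≤ C * (1 + p ^ 2))
    (ν : Measure ℝ) (hν0 : ν (Set.Iic (0 : ℝ)) = 0)
    (hνfin : ∫⁻ s : ℝ, ENNReal.ofReal (min s 1) ∂ν < ⊤)
    (F : ℂ → ℂ)
    (hF : ∀ lam : ℂ, 0 ≤ lam.re →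
      F lam = ∫ s : ℝ, (1 - Complex.exp (-(lam * s))) ∂ν)
    (h : SchwartzMap ℝ ℂ) (x : ℝ) :
    Integrable (fun zz : ℝ =>
      ((Real.sqrt (2 * Real.pi))⁻¹ *
        ∫ p : ℝ, Complex.exp (Complex.I * p * x) *
          (Complex.exp ((zz : ℂ) * η p) * fhat (⇑h) p)) - h x) ν ∧
    (∫ zz : ℝ, (((Real.sqrt (2 * Real.pi))⁻¹ *
        ∫ p : ℝ, Complex.exp (Complex.I * p * x) *
          (Complex.exp ((zz : ℂ) * η p) * fhat (⇑h) p)) - h x) ∂ν)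
      = (Real.sqrt (2 * Real.pi))⁻¹ *
          ∫ p : ℝ, Complex.exp (Complex.I * p * x) * (-(F (-(η p))) * fhat (⇑h) p) := by
  have hpos : ∀ᵐ z ∂ν, 0 < z := by simpa [ae_iff, not_lt, Set.Iic] using hν0
  have hnonneg : ∀ᵐ z ∂ν, 0 ≤ z := hpos.mono fun _ => le_of_lt
  have : SigmaFinite ν := sigmaFinite_of_lintegral_min_one_lt_top hpos hνfin
  obtain ⟨g, hg⟩ := exists_schwartzMap_eq_fhat h
  set G : ℝ → ℂ := fun p => exp (I * p * x) * fhat h p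
  have hprod := integrable_cexp_mul_sub_one_mul_prod hηm hre hnonneg
    (integrable_min_one_of_lintegral_lt_top hnonneg hνfin)
    (h.integrable_cexp_mul_fhat x).aestronglyMeasurable
    ((g.integrable_norm_add_two_mul_norm hηm hbound).congr
      (Eventually.of_forall fun p => by simp [hg, norm_exp]))
  have hT : (fun z : ℝ => (((√(2 * π))⁻¹ : ℝ) * ∫ p : ℝ, exp (I * p * x) *
      (exp (z * η p) * fhat h p)) - h x)
        =ᵐ[ν] fun z => ((√(2 * π))⁻¹ : ℝ) * ∫ p, (exp (z * η p) - 1) * G p := by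
    filter_upwards [hnonneg] with z hz
    exact h.fhat_multiplier_cexp_sub_self hηm hre hz x
  have hlevy : ∀ p, ∫ z, (exp (z * η p) - 1) ∂ν = -F (-η p) := fun p => by
    rw [hF _ (by simpa using hre p), ← integral_neg]
    simp_rw [neg_sub, neg_mul, neg_neg, mul_comm (η p)]
  refine ⟨(hprod.integral_prod_left.const_mul _).congr hT.symm, ?_⟩
  rw [integral_congr_ae hT, integral_const_mul, integral_integral_swap hprod]
  simp only [integral_mul_const, hlevy]
  simp only [G, mul_left_comm]

theorem stmt4
    (η : ℝ → ℂ) (hηm : Measurable η)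
    (hre : ∀ p : ℝ, (η p).re ≤ 0)
    (C : ℝ) (hC : 0 < C)
    (hbound : ∀ p : ℝ, ‖η p‖ ≤ C * (1 + p ^ 2))
    (ν : Measure ℝ) (hν0 : ν (Set.Iic (0 : ℝ)) = 0)
    (hνfin : ∫⁻ s : ℝ, ENNReal.ofReal (min s 1) ∂ν < ⊤)
    (F : ℂ → ℂ)
    (hF : ∀ lam : ℂ, 0 ≤ lam.re →
      F lam = ∫ s : ℝ, (1 - Complex.exp (-(lam * s))) ∂ν)
    (h : SchwartzMap ℝ ℂ) (x : ℝ) :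
    Integrable (fun zz : ℝ =>
      ((Real.sqrt (2 * Real.pi))⁻¹ *
        ∫ p : ℝ, Complex.exp (Complex.I * p * x) *
          (Complex.exp ((zz : ℂ) * η p) * fhat (⇑h) p)) - h x) ν ∧
    (∫ zz : ℝ, (((Real.sqrt (2 * Real.pi))⁻¹ *
        ∫ p : ℝ, Complex.exp (Complex.I * p * x) *
          (Complex.exp ((zz : ℂ) * η p) * fhat (⇑h) p)) - h x) ∂ν)
      = (Real.sqrt (2 * Real.pi))⁻¹ *
          ∫ p : ℝ, Complex.exp (Complex.I * p * x) * (-(F (-(η p))) * fhat (⇑h) p) :=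
  stmt4_general η hηm hre C hbound ν hν0 hνfin F hF h x
end

section
/- Let t > 0, b > 0 and let α : [0,t] → (0,1) be continuous. Then, as η → 0⁺, 1 − exp( −∫_0^t ln(1 + b η^{α(s)}) ds ) is asymptotically equivalent to b ∫_0^t η^{α(s)} ds; that is, lim_{η→0⁺} [ 1 − exp( −∫_0^t ln(1 + b η^{α(s)}) ds ) ] / [ b ∫_0^t η^{α(s)} ds ] = 1. -/
/-!
Write `g η s = b η^{α s}`. Since `α` attains a positive minimum `m` on `[0, t]`, we have
`0 ≤ g η s ≤ b η^m → 0` uniformly in `s`. The bounds `u - u² ≤ log (1 + u) ≤ u` then give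
`∫ log (1 + g) ~ ∫ g`, and both integrals tend to `0`, where `1 - exp (-x) ~ x`.
-/

open MeasureTheory Real Filter Topology Asymptotics Set

lemma Real.sub_sq_le_log_one_add {u : ℝ} (hu : 0 ≤ u) : u - u ^ 2 ≤ log (1 + u) := by
  have hpos : 0 < 1 + u := by linarith
  calc u - u ^ 2 ≤ 1 - (1 + u)⁻¹ := by
        rw [le_sub_iff_add_le, ← le_sub_iff_add_le', inv_le_iff_one_le_mul₀ hpos]
        nlinarith [pow_nonneg hu 3]
    _ ≤ log (1 + u) := one_sub_inv_le_log_of_pos hpos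

lemma Real.one_sub_exp_neg_isEquivalent_id : (fun x => 1 - exp (-x)) ~[𝓝 0] id := by
  have h : HasDerivAt (fun x => 1 - exp (-x)) 1 0 := by
    simpa using ((hasDerivAt_neg (0 : ℝ)).exp).const_sub 1
  have := hasDerivAt_iff_isLittleO_nhds_zero.mp h
  simp only [zero_add, neg_zero, exp_zero, sub_self, sub_zero, smul_eq_mul, mul_one] at this
  exact this

section IntegralLogOneAdd

variable {f : ℝ → ℝ} {a c ε : ℝ}

lemma intervalIntegrable_log_one_add (hac : a ≤ c) (hf : ContinuousOn f (Icc a c))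
    (hf0 : ∀ s ∈ Icc a c, 0 ≤ f s) :
    IntervalIntegrable (fun s => log (1 + f s)) volume a c :=
  (continuousOn_const.add hf |>.log fun s hs => (by linarith [hf0 s hs] : 0 < 1 + f s).ne').intervalIntegrable_of_Icc hac

lemma integral_log_one_add_le (hac : a ≤ c) (hf : ContinuousOn f (Icc a c))
    (hf0 : ∀ s ∈ Icc a c, 0 ≤ f s) :
    ∫ s in a..c, log (1 + f s) ≤ ∫ s in a..c, f s :=
  intervalIntegral.integral_mono_on hac (intervalIntegrable_log_one_add hac hf hf0)
    (hf.intervalIntegrable_of_Icc hac) fun s hs => by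
      linarith [log_le_sub_one_of_pos (show 0 < 1 + f s by linarith [hf0 s hs])]

lemma one_sub_mul_integral_le_integral_log_one_add (hac : a ≤ c) (hf : ContinuousOn f (Icc a c))
    (hf0 : ∀ s ∈ Icc a c, 0 ≤ f s) (hfε : ∀ s ∈ Icc a c, f s ≤ ε) :
    (1 - ε) * ∫ s in a..c, f s ≤ ∫ s in a..c, log (1 + f s) := by
  rw [← intervalIntegral.integral_const_mul]
  refine intervalIntegral.integral_mono_on hac ((hf.intervalIntegrable_of_Icc hac).const_mul _)
    (intervalIntegrable_log_one_add hac hf hf0) fun s hs => ?_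
  have h0 := hf0 s hs
  nlinarith [sub_sq_le_log_one_add h0, mul_le_mul_of_nonneg_left (hfε s hs) h0]

end IntegralLogOneAdd

section Family

variable {ι : Type*} {l : Filter ι} {g : ι → ℝ → ℝ} {ε : ι → ℝ} {a c : ℝ}

lemma isEquivalent_integral_log_one_add (hac : a ≤ c)
    (hg : ∀ᶠ i in l, ContinuousOn (g i) (Icc a c)) (hg0 : ∀ᶠ i in l, ∀ s ∈ Icc a c, 0 ≤ g i s)
    (hgε : ∀ᶠ i in l, ∀ s ∈ Icc a c, g i s ≤ ε i) (hε : Tendsto ε l (𝓝 0)) :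
    (fun i => ∫ s in a..c, log (1 + g i s)) ~[l] fun i => ∫ s in a..c, g i s := by
  have hbound : (fun i => (∫ s in a..c, log (1 + g i s)) - ∫ s in a..c, g i s)
      =O[l] fun i => ε i * ∫ s in a..c, g i s := by
    refine IsBigO.of_bound 1 ?_
    filter_upwards [hg, hg0, hgε] with i hgi hgi0 hgiε
    have hJ : 0 ≤ ∫ s in a..c, g i s := intervalIntegral.integral_nonneg hac hgi0
    have hε0 : 0 ≤ ε i := (hgi0 a (left_mem_Icc.2 hac)).trans (hgiε a (left_mem_Icc.2 hac))
    have := integral_log_one_add_le hac hgi hgi0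
    have := one_sub_mul_integral_le_integral_log_one_add hac hgi hgi0 hgiε
    rw [one_mul, Real.norm_of_nonpos (by linarith), Real.norm_of_nonneg (mul_nonneg hε0 hJ)]
    linarith
  have hsmall : (fun i => ε i * ∫ s in a..c, g i s) =o[l] fun i => ∫ s in a..c, g i s := by
    simpa using (isLittleO_one_iff ℝ).2 hε |>.mul_isBigO (isBigO_refl _ l)
  exact hbound.trans_isLittleO hsmall

theorem one_sub_exp_neg_integral_log_one_add_isEquivalent (hac : a ≤ c)
    (hg : ∀ᶠ i in l, ContinuousOn (g i) (Icc a c)) (hg0 : ∀ᶠ i in l, ∀ s ∈ Icc a c, 0 ≤ g i s)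
    (hgε : ∀ᶠ i in l, ∀ s ∈ Icc a c, g i s ≤ ε i) (hε : Tendsto ε l (𝓝 0)) :
    (fun i => 1 - exp (-∫ s in a..c, log (1 + g i s))) ~[l] fun i => ∫ s in a..c, g i s := by
  have hIJ := isEquivalent_integral_log_one_add hac hg hg0 hgε hε
  have hJ : Tendsto (fun i => ∫ s in a..c, g i s) l (𝓝 0) := by
    have hupper : Tendsto (fun i => (c - a) * ε i) l (𝓝 0) := by
      simpa using hε.const_mul (c - a)
    refine tendsto_of_tendsto_of_tendsto_of_le_of_le' tendsto_const_nhds hupper ?_ ?_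
    · filter_upwards [hg0] with i hgi0 using intervalIntegral.integral_nonneg hac hgi0
    · filter_upwards [hg, hgε] with i hgi hgiε
      simpa using intervalIntegral.integral_mono_on hac (hgi.intervalIntegrable_of_Icc hac)
        (intervalIntegrable_const (μ := volume)) hgiε
  exact (one_sub_exp_neg_isEquivalent_id.comp_tendsto (hIJ.symm.tendsto_nhds hJ)).trans hIJ

end Family

theorem stmt12 (t b : ℝ) (ht : 0 < t) (hb : 0 < b)
    (α : ℝ → ℝ) (hαc : ContinuousOn α (Set.Icc 0 t))
    (hα : ∀ s ∈ Set.Icc (0 : ℝ) t, α s ∈ Set.Ioo (0 : ℝ) 1) :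
    Tendsto (fun η : ℝ =>
      (1 - Real.exp (-(∫ s in (0 : ℝ)..t, Real.log (1 + b * η ^ (α s))))) /
        (b * ∫ s in (0 : ℝ)..t, η ^ (α s)))
      (nhdsWithin 0 (Set.Ioi 0)) (nhds 1) := by
  obtain ⟨s₀, hs₀, hmin⟩ := isCompact_Icc.exists_isMinOn (nonempty_Icc.2 ht.le) hαc
  have hm : 0 < α s₀ := (hα s₀ hs₀).1
  have hη : ∀ᶠ η in 𝓝[>] (0 : ℝ), η ∈ Ioo 0 1 := Ioo_mem_nhdsGT one_pos
  have hcont : ∀ η : ℝ, 0 < η → ContinuousOn (fun s => η ^ α s) (Icc 0 t) := fun η hη0 =>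
    continuousOn_const.rpow hαc fun _ _ => Or.inl hη0.ne'
  have hequiv := one_sub_exp_neg_integral_log_one_add_isEquivalent (l := 𝓝[>] 0)
    (g := fun η s => b * η ^ α s) (ε := fun η => b * η ^ α s₀) ht.le
    (hη.mono fun η hη => continuousOn_const.mul (hcont η hη.1))
    (hη.mono fun η hη s _ => mul_nonneg hb.le (rpow_nonneg hη.1.le _))
    (hη.mono fun η hη s hs => by
      gcongr b * ?_
      exact rpow_le_rpow_of_exponent_ge hη.1 hη.2.le (hmin hs))
    (by simpa [zero_rpow hm.ne'] using
      ((continuousAt_rpow_const 0 _ (Or.inr hm.le)).tendsto.mono_left nhdsWithin_le_nhds).const_mul b)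
  simp only [intervalIntegral.integral_const_mul] at hequiv
  refine (isEquivalent_iff_tendsto_one ?_).mp hequiv
  filter_upwards [hη] with η hη
  exact (mul_pos hb <| intervalIntegral.intervalIntegral_pos_of_pos_on
    ((hcont η hη.1).intervalIntegrable_of_Icc ht.le) (fun s _ => rpow_pos_of_pos hη.1 _) ht).ne'
end

section
/- Let α ∈ (0,2), L ≥ 0, let μ be a Borel probability measure on ℝ with lim_{x→∞} x^α μ((x,∞)) = L, and let ν be a Borel probability measure on (0,∞) with ∫_0^∞ z ν(dz) < ∞. Then lim_{x→∞} x^α ∫_0^∞ μ( (x z^{-1/α}, ∞) ) ν(dz) = L ∫_0^∞ z ν(dz). -/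
open MeasureTheory Real Filter

/-!
Substituting `y = x z^{-1/α}` turns the integrand `x^α μ((x z^{-1/α}, ∞))` into `z · g(y)` with
`g(y) = y^α μ((y, ∞))`. Since `g → L` and `g` is bounded on `[0, ∞)`, dominated convergence with the
integrable majorant `M z` gives the limit `L ∫ z dν`.
-/

lemma rpow_mul_comp_mul_rpow_neg_inv (f : ℝ → ℝ) {α x z : ℝ} (hα : α ≠ 0) (hx : 0 ≤ x)
    (hz : 0 < z) :
    x ^ α * f (x * z ^ (-(1 / α))) =
      z * ((x * z ^ (-(1 / α))) ^ α * f (x * z ^ (-(1 / α)))) := by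
  have hpow : (x * z ^ (-(1 / α))) ^ α = x ^ α * z⁻¹ := by
    rw [mul_rpow hx (rpow_nonneg hz.le _), ← rpow_mul hz.le,
      show -(1 / α) * α = -1 by field_simp, rpow_neg_one]
  rw [hpow]
  field_simp

lemma exists_forall_nonneg_rpow_mul_measure_Ioi_le {μ : Measure ℝ} [IsFiniteMeasure μ]
    {α L : ℝ} (hα : 0 ≤ α)
    (hμ : Tendsto (fun x : ℝ => x ^ α * (μ (Set.Ioi x)).toReal) atTop (nhds L)) :
    ∃ M, ∀ y, 0 ≤ y → y ^ α * (μ (Set.Ioi y)).toReal ≤ M := by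
  obtain ⟨x₀, hx₀⟩ := eventually_atTop.mp (hμ.eventually (eventually_le_nhds (lt_add_one L)))
  refine ⟨max (L + 1) (max x₀ 0 ^ α * μ.real Set.univ), fun y hy => ?_⟩
  rcases le_or_gt x₀ y with hy₀ | hy₀
  · exact (hx₀ y hy₀).trans (le_max_left _ _)
  · refine le_max_of_le_right (mul_le_mul ?_ ?_ ENNReal.toReal_nonneg (rpow_nonneg ?_ _))
    · exact rpow_le_rpow hy (hy₀.le.trans (le_max_left _ _)) hα
    · exact measureReal_mono (Set.subset_univ _)
    · exact le_max_right _ _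

lemma tendsto_integral_mul_comp_mul_rpow {ν : Measure ℝ} {g : ℝ → ℝ} {c L M : ℝ}
    (hg : Measurable g) (hgM : ∀ y, 0 ≤ y → ‖g y‖ ≤ M) (hgL : Tendsto g atTop (nhds L))
    (hν : ∀ᵐ z ∂ν, 0 < z) (hνmean : Integrable (fun z : ℝ => z) ν) :
    Tendsto (fun x : ℝ => ∫ z : ℝ, z * g (x * z ^ c) ∂ν) atTop (nhds (L * ∫ z : ℝ, z ∂ν)) := by
  rw [← integral_const_mul]
  refine tendsto_integral_filter_of_dominated_convergence (fun z : ℝ => M * z)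
    (Eventually.of_forall fun x => by fun_prop) ?_ (hνmean.const_mul M) ?_
  · filter_upwards [eventually_ge_atTop (0 : ℝ)] with x hx
    filter_upwards [hν] with z hz
    rw [norm_mul, Real.norm_of_nonneg hz.le, mul_comm M]
    exact mul_le_mul_of_nonneg_left (hgM _ (mul_nonneg hx (rpow_nonneg hz.le _))) hz.le
  · filter_upwards [hν] with z hz
    rw [mul_comm L]
    exact (hgL.comp (tendsto_id.atTop_mul_const (rpow_pos_of_pos hz c))).const_mul z

theorem stmt17_general (α : ℝ) (hα : α ∈ Set.Ioo (0 : ℝ) 2) (L : ℝ)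
    (μ : Measure ℝ) [IsProbabilityMeasure μ]
    (hμ : Tendsto (fun x : ℝ => x ^ α * (μ (Set.Ioi x)).toReal) atTop (nhds L))
    (ν : Measure ℝ) (hν0 : ν (Set.Iic (0 : ℝ)) = 0)
    (hνmean : Integrable (fun z : ℝ => z) ν) :
    Tendsto (fun x : ℝ =>
        x ^ α * ∫ z : ℝ, (μ (Set.Ioi (x * z ^ (-(1 / α))))).toReal ∂ν)
      atTop (nhds (L * ∫ z : ℝ, z ∂ν)) := by
  set tail : ℝ → ℝ := fun y => (μ (Set.Ioi y)).toReal
  have htail : Antitone tail := fun a b hab =>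
    ENNReal.toReal_mono (measure_ne_top μ _) (measure_mono (Set.Ioi_subset_Ioi hab))
  have hνpos : ∀ᵐ z ∂ν, 0 < z := by
    simpa only [ae_iff, not_lt, Set.Iic_def] using hν0
  obtain ⟨M, hM⟩ := exists_forall_nonneg_rpow_mul_measure_Ioi_le hα.1.le hμ
  have hbound : ∀ y, 0 ≤ y → ‖y ^ α * tail y‖ ≤ M := fun y hy => by
    rw [Real.norm_of_nonneg (mul_nonneg (rpow_nonneg hy _) ENNReal.toReal_nonneg)]
    exact hM y hy
  refine (tendsto_integral_mul_comp_mul_rpow (c := -(1 / α))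
    ((measurable_id.pow_const α).mul htail.measurable) hbound hμ hνpos hνmean).congr' ?_
  filter_upwards [eventually_ge_atTop (0 : ℝ)] with x hx
  rw [← integral_const_mul]
  refine integral_congr_ae ?_
  filter_upwards [hνpos] with z hz
  exact (rpow_mul_comp_mul_rpow_neg_inv tail hα.1.ne' hx hz).symm

theorem stmt17 (α : ℝ) (hα : α ∈ Set.Ioo (0 : ℝ) 2) (L : ℝ) (hL : 0 ≤ L)
    (μ : Measure ℝ) [IsProbabilityMeasure μ]
    (hμ : Tendsto (fun x : ℝ => x ^ α * (μ (Set.Ioi x)).toReal) atTop (nhds L))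
    (ν : Measure ℝ) [IsProbabilityMeasure ν] (hν0 : ν (Set.Iic (0 : ℝ)) = 0)
    (hνmean : Integrable (fun z : ℝ => z) ν) :
    Tendsto (fun x : ℝ =>
        x ^ α * ∫ z : ℝ, (μ (Set.Ioi (x * z ^ (-(1 / α))))).toReal ∂ν)
      atTop (nhds (L * ∫ z : ℝ, z ∂ν)) :=
  stmt17_general α hα L μ hμ ν hν0 hνmean
end
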